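/- arXiv:2409.19212 — 2 statements merged into one kernel-verified Lean document; each statement's English description precedes it below -/
import Mathlib

section
/- Let 0 < μα < 1, let P = (1/(2α)) [[1, √(μα)-1],[√(μα)-1, (1-√(μα))²]] ⊗ I_d, let φ be μ-strongly convex with minimizer w*, and let V = θ^T P θ + φ(w) - φ(w*) with θ = [(w-w*)^T, (w_{-1}-w*)^T]^T. If z = w + γ(w - w_{-1}) with γ = (1-√(μα))/(1+√(μα)), then ||z - w|| ≤ (2√(2α)/(1+√(μα))) √V. -/
/-! With `s = √(μα)`, the block matrix `P` is `(1/(2α))` times the Gram matrix of `(1, s - 1)`, so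
`θᵀPθ = ‖v‖² / (2α)` for `v = (w - w*) + (s - 1)(w₋₁ - w*)`. Writing
`(1 - s)(w - w₋₁) = v - s (w - w*)`, the triangle inequality bounds `(1 - s)‖w - w₋₁‖` by
`‖v‖ + s‖w - w*‖`. Each term is at most `√(2α V)`: the first because `V ≥ ‖v‖² / (2α)`, the second
because strong convexity gives `V ≥ φ w - φ w* ≥ (μ/2)‖w - w*‖² = s²‖w - w*‖² / (2α)`. Finally
`‖z - w‖ = γ‖w - w₋₁‖` and `γ = (1 - s) / (1 + s)`. -/

open Matrix

theorem dotProduct_fromBlocks_mulVec_sumElim {ι : Type*} [Fintype ι] [DecidableEq ι] (c : ℝ)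
    (x y : EuclideanSpace ℝ ι) :
    Sum.elim x y ⬝ᵥ (fromBlocks 1 (c • 1) (c • 1) (c ^ 2 • 1) : Matrix (ι ⊕ ι) (ι ⊕ ι) ℝ) *ᵥ
      Sum.elim x y = ‖x + c • y‖ ^ 2 := by
  rw [← real_inner_self_eq_norm_sq, EuclideanSpace.inner_eq_star_dotProduct]
  simp only [fromBlocks_mulVec, smul_mulVec, one_mulVec, dotProduct, Fintype.sum_sum_type,
    Sum.elim_inl, Sum.elim_inr, Pi.add_apply, Pi.smul_apply, smul_eq_mul, Function.comp_apply,
    ← Finset.sum_add_distrib, WithLp.ofLp_add, WithLp.ofLp_smul, star_trivial]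
  refine Finset.sum_congr rfl fun i _ => ?_
  ring

theorem one_sub_mul_norm_sub_le {E : Type*} [SeminormedAddCommGroup E] [NormedSpace ℝ E]
    {s : ℝ} (hs0 : 0 ≤ s) (hs1 : s ≤ 1) (w u a : E) :
    (1 - s) * ‖w - u‖ ≤ ‖(w - a) + (s - 1) • (u - a)‖ + s * ‖w - a‖ := by
  have hsplit : (1 - s) • (w - u) = ((w - a) + (s - 1) • (u - a)) - s • (w - a) := by module
  calc (1 - s) * ‖w - u‖ = ‖(1 - s) • (w - u)‖ := (norm_smul_of_nonneg (by linarith) _).symm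
    _ ≤ ‖(w - a) + (s - 1) • (u - a)‖ + ‖s • (w - a)‖ := hsplit ▸ norm_sub_le _ _
    _ = ‖(w - a) + (s - 1) • (u - a)‖ + s * ‖w - a‖ := by rw [norm_smul_of_nonneg hs0]

theorem sqrt_mul_mul_norm_sub_le_of_quadratic_growth {E : Type*} [SeminormedAddCommGroup E]
    {φ : E → ℝ} {μ α : ℝ} (hμ : 0 ≤ μ) (hα : 0 ≤ α) {wstar : E}
    (hsc : ∀ u, φ wstar + μ / 2 * ‖u - wstar‖ ^ 2 ≤ φ u) (u : E) :
    Real.sqrt (μ * α) * ‖u - wstar‖ ≤ Real.sqrt (2 * α * (φ u - φ wstar)) := by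
  rw [← Real.sqrt_sq (norm_nonneg (u - wstar)), ← Real.sqrt_mul (by positivity)]
  refine Real.sqrt_le_sqrt ?_
  nlinarith [hsc u]

theorem stmt_6 {d : ℕ} (μ α : ℝ) (hμ : 0 < μ) (hα : 0 < α) (hμα : μ * α < 1)
    (φ : EuclideanSpace ℝ (Fin d) → ℝ) (wstar : EuclideanSpace ℝ (Fin d))
    (hsc : ∀ u : EuclideanSpace ℝ (Fin d),
      φ wstar + μ / 2 * ‖u - wstar‖ ^ 2 ≤ φ u)
    (P : Matrix (Fin d ⊕ Fin d) (Fin d ⊕ Fin d) ℝ)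
    (hP : P = (1 / (2 * α)) •
      Matrix.fromBlocks (1 : Matrix (Fin d) (Fin d) ℝ)
        ((Real.sqrt (μ * α) - 1) • (1 : Matrix (Fin d) (Fin d) ℝ))
        ((Real.sqrt (μ * α) - 1) • (1 : Matrix (Fin d) (Fin d) ℝ))
        (((1 - Real.sqrt (μ * α)) ^ 2) • (1 : Matrix (Fin d) (Fin d) ℝ)))
    (w wm1 : EuclideanSpace ℝ (Fin d))
    (θ : Fin d ⊕ Fin d → ℝ)
    (hθ : θ = Sum.elim (fun i => w i - wstar i) (fun i => wm1 i - wstar i))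
    (V : ℝ) (hV : V = θ ⬝ᵥ P.mulVec θ + φ w - φ wstar)
    (γ : ℝ) (hγ : γ = (1 - Real.sqrt (μ * α)) / (1 + Real.sqrt (μ * α)))
    (z : EuclideanSpace ℝ (Fin d)) (hz : z = w + γ • (w - wm1)) :
    ‖z - w‖ ≤ 2 * Real.sqrt (2 * α) / (1 + Real.sqrt (μ * α)) * Real.sqrt V := by
  set s := Real.sqrt (μ * α)
  have hs0 : 0 ≤ s := Real.sqrt_nonneg _
  have hs1 : s < 1 := (Real.sqrt_lt' one_pos).2 (by linarith)
  set v := (w - wstar) + (s - 1) • (wm1 - wstar)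
  have hquad : θ ⬝ᵥ P *ᵥ θ = ‖v‖ ^ 2 / (2 * α) := by
    have hθ' : θ = Sum.elim (w - wstar) (wm1 - wstar) := hθ
    rw [hP, hθ', smul_mulVec, dotProduct_smul, show (1 - s) ^ 2 = (s - 1) ^ 2 by ring,
      dotProduct_fromBlocks_mulVec_sumElim, smul_eq_mul]
    ring
  have hgap : 0 ≤ φ w - φ wstar := by nlinarith [hsc w]
  have h2αV : 2 * α * V = ‖v‖ ^ 2 + 2 * α * (φ w - φ wstar) := by
    rw [hV, hquad]; field_simp; ring
  have hv : ‖v‖ ≤ Real.sqrt (2 * α * V) :=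
    Real.le_sqrt_of_sq_le (by nlinarith)
  have hw : s * ‖w - wstar‖ ≤ Real.sqrt (2 * α * V) :=
    (sqrt_mul_mul_norm_sub_le_of_quadratic_growth hμ.le hα.le hsc w).trans
      (Real.sqrt_le_sqrt (by nlinarith))
  have hzw : ‖z - w‖ = (1 - s) * ‖w - wm1‖ / (1 + s) := by
    rw [hz, add_sub_cancel_left, norm_smul_of_nonneg (hγ ▸ by positivity), hγ]
    ring
  calc ‖z - w‖ ≤ (‖v‖ + s * ‖w - wstar‖) / (1 + s) := by
        rw [hzw]; gcongr; exact one_sub_mul_norm_sub_le hs0 hs1.le w wm1 wstar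
    _ ≤ 2 * Real.sqrt (2 * α) / (1 + s) * Real.sqrt V := by
        rw [Real.sqrt_mul (by positivity)] at hv hw
        rw [div_mul_eq_mul_div]; gcongr; linarith
end

section
/- Let Φ: R^{d_x} → R be differentiable and satisfy the relaxed descent inequality: Φ(x') ≤ Φ(x) + ⟨∇Φ(x), x'-x⟩ + ((L_0 + L_1||∇Φ(x)||)/2)||x'-x||² whenever ||x'-x|| ≤ r. Consider the normalized step x_{t+1} = x_t - η m_t/||m_t|| with η ≤ r and m_t ≠ 0, and set h_t = m_t - ∇Φ(x_t). Then Φ(x_{t+1}) ≤ Φ(x_t) - η||∇Φ(x_t)|| + 2η||h_t|| + (η²/2)(L_0 + L_1||∇Φ(x_t)||). -/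
open scoped RealInnerProductSpace

theorem stmt_14 {E : Type*} [NormedAddCommGroup E] [InnerProductSpace ℝ E]
    (Φ : E → ℝ) (gΦ : E → E) (L0 L1 r : ℝ) (hr : 0 < r)
    (hdescent : ∀ x x' : E, ‖x' - x‖ ≤ r →
      Φ x' ≤ Φ x + ⟪gΦ x, x' - x⟫ + (L0 + L1 * ‖gΦ x‖) / 2 * ‖x' - x‖ ^ 2)
    (η : ℝ) (hη0 : 0 ≤ η) (hηr : η ≤ r)
    (x m xnext h : E) (hm : m ≠ 0)
    (hstep : xnext = x - (η / ‖m‖) • m) (hh : h = m - gΦ x) :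
    Φ xnext ≤ Φ x - η * ‖gΦ x‖ + 2 * η * ‖h‖ +
      η ^ 2 / 2 * (L0 + L1 * ‖gΦ x‖) := by
  have hmpos : (0:ℝ) < ‖m‖ := norm_pos_iff.mpr hm
  have hdiff : xnext - x = -((η / ‖m‖) • m) := by rw [hstep]; abel
  have hnorm : ‖xnext - x‖ = η := by
    rw [hdiff, norm_neg, norm_smul, Real.norm_eq_abs, abs_of_nonneg
      (div_nonneg hη0 hmpos.le)]
    field_simp
  have hd := hdescent x xnext (by rw [hnorm]; exact hηr)
  have hinner : ⟪gΦ x, xnext - x⟫ = -(η / ‖m‖) * ⟪gΦ x, m⟫ := by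
    rw [hdiff, inner_neg_right, real_inner_smul_right]; ring
  have hg : gΦ x = m - h := by rw [hh]; abel
  have hgm : ⟪gΦ x, m⟫ = ‖m‖ ^ 2 - ⟪h, m⟫ := by
    rw [hg, inner_sub_left, real_inner_self_eq_norm_sq]
  have hcs : ⟪h, m⟫ ≤ ‖h‖ * ‖m‖ := real_inner_le_norm h m
  have hmg : ‖gΦ x‖ - ‖h‖ ≤ ‖m‖ := by
    have := norm_sub_le m h
    rw [← hg] at this
    linarith
  have key : ⟪gΦ x, xnext - x⟫ ≤ -η * ‖gΦ x‖ + 2 * η * ‖h‖ := by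
    rw [hinner, hgm]
    have h1 : -(η / ‖m‖) * (‖m‖ ^ 2 - ⟪h, m⟫) ≤ -(η / ‖m‖) * (‖m‖ ^ 2 - ‖h‖ * ‖m‖) := by
      apply mul_le_mul_of_nonpos_left (by linarith) (neg_nonpos.mpr (div_nonneg hη0 hmpos.le))
    have h2 : -(η / ‖m‖) * (‖m‖ ^ 2 - ‖h‖ * ‖m‖) = -η * ‖m‖ + η * ‖h‖ := by
      field_simp; ring
    have h3 : -η * ‖m‖ ≤ -η * (‖gΦ x‖ - ‖h‖) :=
      mul_le_mul_of_nonpos_left hmg (by linarith)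
    nlinarith
  rw [hnorm] at hd
  nlinarith [hd, key]
end
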